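/- Let a₁, a₂, a₃, b₁, b₂, b₃ ∈ ℂ. Assume that the 4×3 complex matrix with rows (a₁, a₃, 0), (0, a₂, a₃), (b₁, b₃, 0), (0, b₂, b₃) has rank at most 2, that (a₁, b₁) ≠ (0,0), and that (a₃, b₃) ≠ (0,0). Then a₁b₂ − a₂b₁ = a₁b₃ − a₃b₁ = a₂b₃ − a₃b₂ = 0; equivalently, the 2×3 matrix with rows (a₁, a₂, a₃) and (b₁, b₂, b₃) has rank at most 1. -/

import Mathlib

open Matrix

lemma minor_zero {M : Matrix (Fin 4) (Fin 3) ℂ} (hrank : M.rank ≤ 2) (f : Fin 3 → Fin 4) :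
    (M.submatrix f id).det = 0 := by
  by_contra h
  have hU : IsUnit (M.submatrix f id) := (Matrix.isUnit_iff_isUnit_det _).2 (Ne.isUnit h)
  have h3 : (M.submatrix f id).rank = 3 := by
    simpa using Matrix.rank_of_isUnit _ hU
  have heq : M.submatrix f id = ((1 : Matrix (Fin 4) (Fin 4) ℂ).submatrix f id) * M := by
    ext i j
    simp [Matrix.mul_apply, Matrix.one_apply]
  have := Matrix.rank_mul_le_right ((1 : Matrix (Fin 4) (Fin 4) ℂ).submatrix f id) M
  rw [← heq, h3] at this
  omega

theorem statement15 (a₁ a₂ a₃ b₁ b₂ b₃ : ℂ)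
    (hrank : Matrix.rank !![a₁, a₃, 0; 0, a₂, a₃; b₁, b₃, 0; 0, b₂, b₃] ≤ 2)
    (ha : (a₁, b₁) ≠ (0, 0)) (hb : (a₃, b₃) ≠ (0, 0)) :
    a₁ * b₂ - a₂ * b₁ = 0 ∧ a₁ * b₃ - a₃ * b₁ = 0 ∧ a₂ * b₃ - a₃ * b₂ = 0 := by
  have h123 := minor_zero hrank ![0,1,2]
  have h124 := minor_zero hrank ![0,1,3]
  have h134 := minor_zero hrank ![0,2,3]
  have h234 := minor_zero hrank ![1,2,3]
  rw [Matrix.det_fin_three] at h123 h124 h134 h234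
  simp [Matrix.det_fin_three, Matrix.submatrix_apply, Matrix.vecHead, Matrix.vecTail]
    at h123 h124 h134 h234
  rw [ne_eq, Prod.mk.injEq, not_and_or] at ha hb
  have e2 : a₁ * b₃ - a₃ * b₁ = 0 := by
    rcases hb with h | h
    · exact (mul_eq_zero.mp (show a₃ * (a₁ * b₃ - a₃ * b₁) = 0 by linear_combination -h123)).resolve_left h
    · exact (mul_eq_zero.mp (show b₃ * (a₁ * b₃ - a₃ * b₁) = 0 by linear_combination h134)).resolve_left h
  have e3 : a₂ * b₃ - a₃ * b₂ = 0 := by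
    rcases ha with h | h
    · exact (mul_eq_zero.mp (show a₁ * (a₂ * b₃ - a₃ * b₂) = 0 by linear_combination h124)).resolve_left h
    · exact (mul_eq_zero.mp (show b₁ * (a₂ * b₃ - a₃ * b₂) = 0 by linear_combination -h234)).resolve_left h
  refine ⟨?_, e2, e3⟩
  rcases hb with h | h
  · exact (mul_eq_zero.mp (show a₃ * (a₁ * b₂ - a₂ * b₁) = 0 by linear_combination a₂ * e2 - a₁ * e3)).resolve_left h
  · exact (mul_eq_zero.mp (show b₃ * (a₁ * b₂ - a₂ * b₁) = 0 by linear_combination b₂ * e2 - b₁ * e3)).resolve_left h
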